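/- Let E and Ẽ be the periodic Zeckendorf collections for positive integers determined by lists L = (e_1,…,e_N) and L̃ = (ẽ_1,…,ẽ_M) respectively (N, M ≥ 2, e_1 ≥ 1, ẽ_1 ≥ 1). Then E ⊆ Ẽ if and only if, for every n ≥ 2, the maximal L-block θ^n at index n−1 belongs to Ẽ. -/

import Mathlib

open Filter Topology

namespace Zeck

-- A coefficient function is `μ : ℕ → ℕ`; index `0` is unused (members vanish there).

/-- The maximal L-block `θ^n` at index `n-1`, for `L = (e 1, …, e N)`. -/
def maxBlock (N : ℕ) (e : ℕ → ℕ) (n : ℕ) : ℕ → ℕ :=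
  fun k => if 1 ≤ k ∧ k < n then e ((n - k - 1) % N + 1) else 0

/-- A proper L-block at index `n-1` with support interval `[a, n-1]`. -/
def IsProperBlock (N : ℕ) (e : ℕ → ℕ) (ζ : ℕ → ℕ) (a n : ℕ) : Prop :=
  2 ≤ n ∧ 1 ≤ a ∧ a ≤ n - 1 ∧ (∀ j, a < j → ζ j = maxBlock N e n j) ∧
    ζ a < maxBlock N e n a ∧ (∀ j, j < a → ζ j = 0)

/-- An L-block (proper or maximal), together with its support interval. -/
def IsBlock (N : ℕ) (e : ℕ → ℕ) (ζ : ℕ → ℕ) (I : Finset ℕ) : Prop :=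
  ∃ n, 2 ≤ n ∧ ((ζ = maxBlock N e n ∧ I = Finset.Icc 1 (n - 1)) ∨
    (∃ a, IsProperBlock N e ζ a n ∧ I = Finset.Icc a (n - 1)))

/-- Membership in the periodic Zeckendorf collection for positive integers determined by L:
finite sums of L-blocks with pairwise disjoint support intervals (the zero function has `l = 0`). -/
def memColl (N : ℕ) (e : ℕ → ℕ) (μ : ℕ → ℕ) : Prop :=
  ∃ (l : ℕ) (ζ : ℕ → ℕ → ℕ) (I : ℕ → Finset ℕ),
    (∀ i, i < l → IsBlock N e (ζ i) (I i)) ∧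
    (∀ i j, i < l → j < l → i ≠ j → Disjoint (I i) (I j)) ∧
    ∀ k, μ k = ∑ i ∈ Finset.range l, ζ i k

/-- The maximal L*-block `β̄^n` at index `n`. -/
def maxStarBlock (N : ℕ) (e : ℕ → ℕ) (n : ℕ) : ℕ → ℕ :=
  fun k => if n ≤ k then e ((k - n) % N + 1) else 0

/-- A proper L*-block at index `n` with support interval `[n, b]`. -/
def IsProperStarBlock (N : ℕ) (e : ℕ → ℕ) (ζ : ℕ → ℕ) (n b : ℕ) : Prop :=
  1 ≤ n ∧ n ≤ b ∧ (∀ j, j < b → ζ j = maxStarBlock N e n j) ∧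
    ζ b < maxStarBlock N e n b ∧ (∀ j, b < j → ζ j = 0)

/-- Membership in the periodic Zeckendorf collection for `(0,1)` determined by L:
nonzero finite or infinite sums of proper L*-blocks with pairwise disjoint support intervals. -/
def memStar (N : ℕ) (e : ℕ → ℕ) (ε : ℕ → ℕ) : Prop :=
  ε ≠ 0 ∧ ∃ (l : ℕ∞) (ζ : ℕ → ℕ → ℕ) (nb : ℕ → ℕ × ℕ),
    (∀ i : ℕ, (i : ℕ∞) < l → IsProperStarBlock N e (ζ i) (nb i).1 (nb i).2) ∧
    (∀ i j : ℕ, (i : ℕ∞) < l → (j : ℕ∞) < l → i ≠ j →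
      Disjoint (Finset.Icc (nb i).1 (nb i).2) (Finset.Icc (nb j).1 (nb j).2)) ∧
    ∀ k, ε k = ∑' i : ℕ, if (i : ℕ∞) < l then ζ i k else 0

/-- A decomposition `ε = ζ^1 + … + ζ^l + μ` in which the `ζ^i` are proper L*-blocks whose
support intervals partition `[1, b]` and `μ` vanishes on `[0, b]` (`l, b` possibly infinite). -/
def DecompData (N : ℕ) (e : ℕ → ℕ) (ε : ℕ → ℕ) (l : ℕ∞) (ζ : ℕ → ℕ → ℕ)
    (nb : ℕ → ℕ × ℕ) (b : ℕ∞) (μ : ℕ → ℕ) : Prop :=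
  (∀ i : ℕ, (i : ℕ∞) < l → IsProperStarBlock N e (ζ i) (nb i).1 (nb i).2) ∧
  (∀ i j : ℕ, (i : ℕ∞) < l → (j : ℕ∞) < l → i ≠ j →
    Disjoint (Set.Icc (nb i).1 (nb i).2) (Set.Icc (nb j).1 (nb j).2)) ∧
  (⋃ i ∈ {i : ℕ | (i : ℕ∞) < l}, Set.Icc (nb i).1 (nb i).2) = {k : ℕ | 1 ≤ k ∧ (k : ℕ∞) ≤ b} ∧
  (∀ k : ℕ, (k : ℕ∞) ≤ b → μ k = 0) ∧
  (∀ k, ε k = (∑' i : ℕ, if (i : ℕ∞) < l then ζ i k else 0) + μ k)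

/-- Membership in `E̅*`. -/
def memEBar (N : ℕ) (e : ℕ → ℕ) (ε : ℕ → ℕ) : Prop :=
  memStar N e ε ∨
  ∃ (l : ℕ) (ζ : ℕ → ℕ → ℕ) (nb : ℕ → ℕ × ℕ) (b : ℕ),
    DecompData N e ε (l : ℕ∞) ζ nb (b : ℕ∞) (maxStarBlock N e (b + 1))

/-- Descending lexicographic order. -/
def dLT (a b : ℕ → ℕ) : Prop := ∃ k, a k < b k ∧ ∀ j, j < k → a j = b j

def dLE (a b : ℕ → ℕ) : Prop := a = b ∨ dLT a b

/-- Ascending lexicographic order (on finitely supported functions). -/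
def aLT (a b : ℕ → ℕ) : Prop := ∃ k, a k < b k ∧ ∀ j, k < j → a j = b j

/-- The basis coefficient function `β^b`. -/
def betaUnit (b : ℕ) : ℕ → ℕ := fun k => if k = b then 1 else 0

/-- The relation `η = rev̄(ε)`. -/
def RevBar (N : ℕ) (e : ℕ → ℕ) (ε η : ℕ → ℕ) : Prop :=
  (dLE (maxStarBlock N e 1) ε ∧ η = maxStarBlock N e 1) ∨
  (dLT ε (maxStarBlock N e 1) ∧
    ((memStar N e ε ∧ η = ε) ∨
     ∃ (l : ℕ) (ζ : ℕ → ℕ → ℕ) (nb : ℕ → ℕ × ℕ) (b : ℕ) (μ : ℕ → ℕ),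
       DecompData N e ε (l : ℕ∞) ζ nb (b : ℕ∞) μ ∧
       ((dLT (maxStarBlock N e (b + 1)) μ ∧
           η = fun k => (∑ i ∈ Finset.range l, ζ i k) + betaUnit b k) ∨
        (μ = maxStarBlock N e (b + 1) ∧ η = ε))))

/-- `Σ_k ε_k w^k` as a real number. -/
noncomputable def evalReal (ε : ℕ → ℕ) (w : ℝ) : ℝ := ∑' k : ℕ, (ε k : ℝ) * w ^ k

/-- `Σ_k ε_k H_k` (finitely supported `ε`). -/
noncomputable def evalNat (ε H : ℕ → ℕ) : ℕ := ∑' k : ℕ, ε k * H k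

/-- The counting function `z`. -/
noncomputable def zfun (N : ℕ) (e : ℕ → ℕ) (Ht : ℕ → ℕ) (x : ℕ) : ℕ :=
  Set.ncard {m : ℕ | m < x ∧ ∃ ε, memColl N e ε ∧ m = evalNat ε Ht}

/-- Characteristic polynomial of `L` for positive integers. -/
noncomputable def fchar (N : ℕ) (e : ℕ → ℕ) (x : ℝ) : ℝ :=
  x ^ N - (∑ k ∈ Finset.Ico 1 N, (e k : ℝ) * x ^ (N - k)) - (1 + (e N : ℝ))

/-- Characteristic polynomial of `L` for `(0,1)`. -/
noncomputable def gchar (N : ℕ) (e : ℕ → ℕ) (x : ℝ) : ℝ :=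
  -1 + (∑ k ∈ Finset.Ico 1 N, (e k : ℝ) * x ^ k) + (1 + (e N : ℝ)) * x ^ N

end Zeck

/-!
Read a member of `E` from its highest block down: it is `0`, a maximal block `θ^n`, or it agrees
with some `θ^n` above an index `a`, is smaller than `θ^n` at `a`, and its part below `a` is again a
member. Membership in `Ẽ` is closed under this last step whenever the function it descends from is
in `Ẽ`: peel off the top `Ẽ`-block of that function and compare `a` with the bottom of its support.
Hence, once every `θ^n` is in `Ẽ`, induction along the top-down description of `μ ∈ E` shows
`μ ∈ Ẽ`.
-/

namespace Zeck

variable {N : ℕ} {e : ℕ → ℕ}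

lemma maxBlock_eq_zero {n k : ℕ} (hk : ¬(1 ≤ k ∧ k < n)) : maxBlock N e n k = 0 :=
  if_neg hk

lemma maxBlock_pred {n : ℕ} (hn : 2 ≤ n) : maxBlock N e n (n - 1) = e 1 := by
  rw [maxBlock, if_pos (by omega), show n - (n - 1) - 1 = 0 by omega, Nat.zero_mod]

lemma one_le_and_lt_of_lt_maxBlock {n a c : ℕ} (h : c < maxBlock N e n a) : 1 ≤ a ∧ a < n := by
  by_contra hc
  rw [maxBlock_eq_zero hc] at h
  exact Nat.not_lt_zero c h

lemma isBlock_maxBlock {n : ℕ} (hn : 2 ≤ n) :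
    IsBlock N e (maxBlock N e n) (Finset.Icc 1 (n - 1)) :=
  ⟨n, hn, .inl ⟨rfl, rfl⟩⟩

namespace IsBlock

variable {ζ : ℕ → ℕ} {I : Finset ℕ}

lemma apply_zero (h : IsBlock N e ζ I) : ζ 0 = 0 := by
  obtain ⟨n, -, ⟨rfl, -⟩ | ⟨a, ⟨-, ha, -, -, -, hbelow⟩, -⟩⟩ := h
  · exact maxBlock_eq_zero (by omega)
  · exact hbelow 0 (by omega)

lemma apply_eq_zero_of_notMem (h : IsBlock N e ζ I) {k : ℕ} (hk : k ∉ I) : ζ k = 0 := by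
  obtain ⟨n, -, ⟨rfl, rfl⟩ | ⟨a, ⟨-, -, han, htop, -, hbelow⟩, rfl⟩⟩ := h
  · exact maxBlock_eq_zero fun ⟨h1, h2⟩ => hk (Finset.mem_Icc.mpr ⟨h1, by omega⟩)
  · rcases lt_or_ge k a with hka | hka
    · exact hbelow k hka
    · have hnk : n - 1 < k := by
        by_contra h
        exact hk (Finset.mem_Icc.mpr ⟨hka, by omega⟩)
      rw [htop k (by omega), maxBlock_eq_zero (by omega)]

lemma apply_eq_zero_of_disjoint (h : IsBlock N e ζ I) {a b k : ℕ} (htop : I.sup id ≤ b)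
    (hd : Disjoint I (Finset.Icc a b)) (hk : a ≤ k) : ζ k = 0 :=
  h.apply_eq_zero_of_notMem fun hkI => Finset.disjoint_left.mp hd hkI
    (Finset.mem_Icc.mpr ⟨hk, (Finset.le_sup (f := id) hkI).trans htop⟩)

end IsBlock

/-- Members of the collection described from the block of highest index down. -/
inductive Stacked (N : ℕ) (e : ℕ → ℕ) : (ℕ → ℕ) → Prop
  | zero : Stacked N e 0
  | max {n : ℕ} (hn : 2 ≤ n) : Stacked N e (maxBlock N e n)
  | proper {μ : ℕ → ℕ} {a n : ℕ} (htop : ∀ j, a < j → μ j = maxBlock N e n j)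
      (hlt : μ a < maxBlock N e n a) (hlow : Stacked N e ((Set.Iio a).indicator μ)) :
      Stacked N e μ

lemma stacked_sum_of_isBlock {ι : Type*} [DecidableEq ι] {ζ : ι → ℕ → ℕ} {I : ι → Finset ℕ}
    (s : Finset ι) (hb : ∀ i ∈ s, IsBlock N e (ζ i) (I i))
    (hd : (s : Set ι).PairwiseDisjoint I) : Stacked N e (∑ i ∈ s, ζ i) := by
  induction s using Finset.induction_on_max_value (fun i => (I i).sup id) with
  | empty => simpa using Stacked.zero
  | insert t s ht hmax ih =>
    rw [Finset.sum_insert ht]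
    have hbs : ∀ i ∈ s, IsBlock N e (ζ i) (I i) := fun i hi => hb i (Finset.mem_insert_of_mem hi)
    have hlow := ih hbs (hd.subset (by simp))
    -- the blocks of `s` end below the top of `I t`, so disjointness puts them below `I t`
    have hvan : ∀ lo hi, I t = Finset.Icc lo hi → ∀ k, lo ≤ k → (∑ i ∈ s, ζ i) k = 0 := by
      intro lo top hIt k hk
      rw [Finset.sum_apply]
      refine Finset.sum_eq_zero fun i hi => (hbs i hi).apply_eq_zero_of_disjoint (b := top) ?_ ?_ hk
      · exact (hmax i hi).trans (hIt ▸ Finset.sup_le fun x hx => (Finset.mem_Icc.mp hx).2)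
      · exact hIt ▸ hd (by simp [hi]) (by simp) (ne_of_mem_of_not_mem hi ht)
    obtain ⟨n, hn, ⟨hζt, hIt⟩ | ⟨a, ⟨-, -, -, htop, hlt, hbelow⟩, hIt⟩⟩ :=
      hb t (Finset.mem_insert_self t s)
    · have hs : ∑ i ∈ s, ζ i = 0 := by
        funext k
        rcases Nat.eq_zero_or_pos k with rfl | hk
        · rw [Finset.sum_apply]
          exact Finset.sum_eq_zero fun i hi => (hbs i hi).apply_zero
        · exact hvan _ _ hIt k hk
      rw [hs, add_zero, hζt]
      exact .max hn
    · have hs := hvan _ _ hIt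
      refine .proper (a := a) (n := n) (fun j hj => ?_) ?_ ?_
      · simp [hs j hj.le, htop j hj]
      · simpa [hs a le_rfl] using hlt
      · convert hlow using 1
        funext k
        by_cases hk : k < a
        · simp [hk, hbelow k hk]
        · simp [hk, hs k (not_lt.mp hk)]

lemma memColl.stacked {μ : ℕ → ℕ} (h : memColl N e μ) : Stacked N e μ := by
  obtain ⟨l, ζ, I, hb, hd, hμ⟩ := h
  have hsum : μ = ∑ i ∈ Finset.range l, ζ i := funext fun k => by rw [hμ k, Finset.sum_apply]
  rw [hsum]
  exact stacked_sum_of_isBlock _ (fun i hi => hb i (Finset.mem_range.mp hi))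
    fun i hi j hj hij => hd i j (Finset.mem_range.mp hi) (Finset.mem_range.mp hj) hij

def MemCollWithin (N : ℕ) (e : ℕ → ℕ) (B : ℕ) (μ : ℕ → ℕ) : Prop :=
  ∃ (l : ℕ) (ζ : ℕ → ℕ → ℕ) (I : ℕ → Finset ℕ),
    (∀ i, i < l → IsBlock N e (ζ i) (I i) ∧ I i ⊆ Finset.Icc 1 B) ∧
    (∀ i j, i < l → j < l → i ≠ j → Disjoint (I i) (I j)) ∧
    ∀ k, μ k = ∑ i ∈ Finset.range l, ζ i k

namespace MemCollWithin

variable {B : ℕ}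

lemma memColl {μ : ℕ → ℕ} (h : MemCollWithin N e B μ) : memColl N e μ :=
  let ⟨l, ζ, I, hb, hd, hμ⟩ := h
  ⟨l, ζ, I, fun i hi => (hb i hi).1, hd, hμ⟩

lemma zero : MemCollWithin N e B 0 :=
  ⟨0, fun _ => 0, fun _ => ∅, by simp, by simp, by simp⟩

lemma mono {B' : ℕ} {μ : ℕ → ℕ} (h : MemCollWithin N e B μ) (hB : B ≤ B') :
    MemCollWithin N e B' μ :=
  let ⟨l, ζ, I, hb, hd, hμ⟩ := h
  ⟨l, ζ, I, fun i hi => ⟨(hb i hi).1, (hb i hi).2.trans (Finset.Icc_subset_Icc le_rfl hB)⟩,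
    hd, hμ⟩

lemma add_isBlock {a b : ℕ} {ρ β : ℕ → ℕ} (hρ : MemCollWithin N e (a - 1) ρ)
    (hβ : IsBlock N e β (Finset.Icc a b)) (ha : 1 ≤ a) (hab : a ≤ b) : MemCollWithin N e b (ρ + β) := by
  obtain ⟨l, ζ, I, hb, hd, hρ⟩ := hρ
  have hbelow : ∀ i, i < l → Disjoint (I i) (Finset.Icc a b) := fun i hi =>
    Finset.disjoint_left.mpr fun x hxI hx => by
      have := Finset.mem_Icc.mp ((hb i hi).2 hxI)
      have := Finset.mem_Icc.mp hx
      omega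
  refine ⟨l + 1, Function.update ζ l β, Function.update I l (Finset.Icc a b), ?_, ?_, ?_⟩
  · intro i hi
    rcases eq_or_ne i l with hil | hil
    · simpa [hil] using ⟨hβ, Finset.Icc_subset_Icc ha le_rfl⟩
    · have hil' : i < l := by omega
      simp only [Function.update_of_ne hil]
      exact ⟨(hb i hil').1, (hb i hil').2.trans (Finset.Icc_subset_Icc le_rfl (by omega))⟩
  · intro i j hi hj hij
    rcases eq_or_ne i l with hil | hil <;> rcases eq_or_ne j l with hjl | hjl
    · exact absurd (hil.trans hjl.symm) hij
    · simpa [hil, Function.update_of_ne hjl] using (hbelow j (by omega)).symm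
    · simpa [hjl, Function.update_of_ne hil] using hbelow i (by omega)
    · simpa [Function.update_of_ne hil, Function.update_of_ne hjl] using
        hd i j (by omega) (by omega) hij
  · intro k
    rw [Finset.sum_range_succ, Function.update_self, Pi.add_apply, hρ k]
    congr 1
    exact Finset.sum_congr rfl fun i hi =>
      by rw [Function.update_of_ne (Finset.mem_range.mp hi).ne]

end MemCollWithin

lemma memCollWithin_maxBlock {n : ℕ} (hn : 2 ≤ n) :
    MemCollWithin N e (n - 1) (maxBlock N e n) := by
  simpa using MemCollWithin.zero.add_isBlock (isBlock_maxBlock hn) le_rfl (by omega)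

lemma memColl_maxBlock {n : ℕ} (hn : 2 ≤ n) : memColl N e (maxBlock N e n) :=
  (memCollWithin_maxBlock hn).memColl

namespace Stacked

lemma exists_bound {μ : ℕ → ℕ} (h : Stacked N e μ) : ∃ B, ∀ j, B < j → μ j = 0 := by
  induction h with
  | zero => exact ⟨0, fun _ _ => rfl⟩
  | @max n _ => exact ⟨n, fun j hj => maxBlock_eq_zero (by omega)⟩
  | @proper μ a n htop hlt _ _ =>
    have := one_le_and_lt_of_lt_maxBlock hlt
    exact ⟨n, fun j hj => by rw [htop j (by omega), maxBlock_eq_zero (by omega)]⟩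

/-- Since a maximal block has top coefficient `e 1 ≥ 1`, only a zero proper block on `[n-1, n-1]`
can reach above the support of `μ`; it is dropped. -/
lemma memCollWithin (he : 1 ≤ e 1) {μ : ℕ → ℕ} (h : Stacked N e μ) :
    ∀ B, (∀ j, B < j → μ j = 0) → MemCollWithin N e B μ := by
  induction h with
  | zero => exact fun _ _ => .zero
  | @max n hn =>
    intro B hB
    have hnB : n - 1 ≤ B := by
      by_contra hc
      have := hB (n - 1) (by omega)
      rw [maxBlock_pred hn] at this
      omega
    exact (memCollWithin_maxBlock hn).mono hnB
  | @proper μ a n htop hlt _ ih =>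
    intro B hB
    obtain ⟨ha, han⟩ := one_le_and_lt_of_lt_maxBlock hlt
    by_cases hnB : n - 1 ≤ B
    · have hρ := ih (a - 1) fun j hj => Set.indicator_of_notMem (by simp; omega) _
      have hβ : IsBlock N e ((Set.Ici a).indicator μ) (Finset.Icc a (n - 1)) := by
        refine ⟨n, by omega, .inr ⟨a, ⟨by omega, ha, by omega, fun j hj => ?_, ?_,
          fun j hj => Set.indicator_of_notMem (by simp; omega) _⟩, rfl⟩⟩
        · simp [hj.le, htop j hj]
        · simpa using hlt
      simpa [← Set.compl_Iio, Set.indicator_self_add_compl] using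
        (hρ.add_isBlock hβ ha (by omega)).mono hnB
    · have hzero : ∀ j, a ≤ j → μ j = 0 := by
        have han' : a = n - 1 := by
          by_contra hc
          have := htop (n - 1) (by omega)
          rw [maxBlock_pred (by omega), hB (n - 1) (by omega)] at this
          omega
        intro j hj
        rcases hj.eq_or_lt with rfl | hj
        · exact hB _ (by omega)
        · rw [htop j hj, maxBlock_eq_zero (by omega)]
      have hμ : (Set.Iio a).indicator μ = μ := Set.indicator_eq_self.mpr fun j hj => by
        by_contra hja
        exact hj (hzero j (not_lt.mp hja))
      rw [← hμ] at hB ⊢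
      exact ih B hB

lemma memColl (he : 1 ≤ e 1) {μ : ℕ → ℕ} (h : Stacked N e μ) : memColl N e μ :=
  let ⟨B, hB⟩ := h.exists_bound
  (h.memCollWithin he B hB).memColl

lemma of_lt {σ μ : ℕ → ℕ} {a : ℕ} (hσ : Stacked N e σ) (htop : ∀ j, a < j → μ j = σ j)
    (hlt : μ a < σ a) (hlow : Stacked N e ((Set.Iio a).indicator μ)) : Stacked N e μ := by
  induction hσ generalizing μ a with
  | zero => exact absurd hlt (Nat.not_lt_zero _)
  | max _ => exact .proper htop hlt hlow
  | @proper σ b n htop' hlt' _ ih =>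
    rcases lt_trichotomy a b with hab | rfl | hab
    · refine .proper (a := b) (n := n) (fun j hj => (htop j (hab.trans hj)).trans (htop' j hj))
        ((htop b hab).trans_lt hlt') (ih (a := a) (fun j hj => ?_) ?_ ?_)
      · by_cases hjb : j < b <;> simp [hjb, htop j hj]
      · simpa [hab] using hlt
      · rwa [Set.indicator_indicator, Set.Iio_inter_Iio, min_eq_left hab.le]
    · exact .proper (fun j hj => (htop j hj).trans (htop' j hj)) (hlt.trans hlt') hlow
    · exact .proper (fun j hj => (htop j hj).trans (htop' j (hab.trans hj)))
        (htop' a hab ▸ hlt) hlow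

lemma of_maxBlocks {M : ℕ} {et : ℕ → ℕ} (H : ∀ n, 2 ≤ n → Stacked M et (maxBlock N e n))
    {μ : ℕ → ℕ} (h : Stacked N e μ) : Stacked M et μ := by
  induction h with
  | zero => exact .zero
  | max hn => exact H _ hn
  | proper htop hlt _ ih =>
    have := one_le_and_lt_of_lt_maxBlock hlt
    exact (H _ (by omega)).of_lt htop hlt ih

end Stacked

end Zeck

open Zeck

theorem subcollection_iff_maxBlocks_mem_general (N M : ℕ) (e et : ℕ → ℕ)
    (het : 1 ≤ et 1) :
    ({μ | memColl N e μ} ⊆ {μ | memColl M et μ}) ↔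
      (∀ n, 2 ≤ n → memColl M et (maxBlock N e n)) :=
  ⟨fun hsub _ hn => hsub (memColl_maxBlock hn),
    fun H _ hμ => (hμ.stacked.of_maxBlocks fun n hn => (H n hn).stacked).memColl het⟩

/-- `E ⊆ Ẽ` if and only if every maximal L-block `θ^n` (`n ≥ 2`) belongs to `Ẽ`. -/
theorem subcollection_iff_maxBlocks_mem (N M : ℕ) (e et : ℕ → ℕ)
    (hN : 2 ≤ N) (hM : 2 ≤ M) (he : 1 ≤ e 1) (het : 1 ≤ et 1) :
    ({μ | memColl N e μ} ⊆ {μ | memColl M et μ}) ↔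
      (∀ n, 2 ≤ n → memColl M et (maxBlock N e n)) :=
  subcollection_iff_maxBlocks_mem_general N M e et het
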